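/- Let A be a unital C*-algebra, E a real Banach space, and τ: A_sa → E a bounded ℝ-linear tracial map (τ(a a*) = τ(a* a) for all a ∈ A). For piecewise smooth paths ξ₁, ξ₂ in U(A) starting at 1, define Δ̃(ξ) = ∫₀¹ τ((1/2πi)ξ'(t)ξ(t)⁻¹) dt. Then Δ̃(ξ₁ξ₂) = Δ̃(ξ₁) + Δ̃(ξ₂), where (ξ₁ξ₂)(t) = ξ₁(t)ξ₂(t). -/

import Mathlib

/-- Let `A` be a unital C*-algebra, `E` a real Banach space and
`τ : A → E` a bounded real-linear tracial map (`τ(a a*) = τ(a* a)`).  For piecewise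
smooth paths of unitaries `ξ₁, ξ₂` starting at `1` (continuous, differentiable with
derivative `dᵢ` off a finite set) with the de la Harpe–Skandalis pre-determinant
`Δ̃(ξ) = ∫₀¹ τ((2πi)⁻¹ ξ'(t) ξ(t)⁻¹) dt`, the pointwise product satisfies
`Δ̃(ξ₁ξ₂) = Δ̃(ξ₁) + Δ̃(ξ₂)`. -/
theorem predeterminant_additive_on_products {A E : Type*} [CStarAlgebra A]
    [NormedAddCommGroup E] [NormedSpace ℝ E] [CompleteSpace E]
    (τ : A →L[ℝ] E) (htracial : ∀ a : A, τ (a * star a) = τ (star a * a))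
    (ξ₁ ξ₂ d₁ d₂ : ℝ → A) (s₁ s₂ : Set ℝ) (hs₁ : s₁.Finite) (hs₂ : s₂.Finite)
    (hcont₁ : ContinuousOn ξ₁ (Set.Icc 0 1)) (hcont₂ : ContinuousOn ξ₂ (Set.Icc 0 1))
    (hmem₁ : ∀ t ∈ Set.Icc (0 : ℝ) 1, ξ₁ t ∈ unitary A)
    (hmem₂ : ∀ t ∈ Set.Icc (0 : ℝ) 1, ξ₂ t ∈ unitary A)
    (h01 : ξ₁ 0 = 1) (h02 : ξ₂ 0 = 1)
    (hd₁ : ∀ t ∈ Set.Icc (0 : ℝ) 1 \ s₁, HasDerivAt ξ₁ (d₁ t) t)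
    (hd₂ : ∀ t ∈ Set.Icc (0 : ℝ) 1 \ s₂, HasDerivAt ξ₂ (d₂ t) t)
    (hint₁ : IntervalIntegrable
      (fun t => τ (((2 * Real.pi * Complex.I : ℂ))⁻¹ • (d₁ t * star (ξ₁ t))))
      MeasureTheory.volume 0 1)
    (hint₂ : IntervalIntegrable
      (fun t => τ (((2 * Real.pi * Complex.I : ℂ))⁻¹ • (d₂ t * star (ξ₂ t))))
      MeasureTheory.volume 0 1) :
    ∫ t in (0 : ℝ)..1, τ (((2 * Real.pi * Complex.I : ℂ))⁻¹ •
        ((d₁ t * ξ₂ t + ξ₁ t * d₂ t) * star (ξ₁ t * ξ₂ t)))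
      = (∫ t in (0 : ℝ)..1, τ (((2 * Real.pi * Complex.I : ℂ))⁻¹ • (d₁ t * star (ξ₁ t))))
        + ∫ t in (0 : ℝ)..1, τ (((2 * Real.pi * Complex.I : ℂ))⁻¹ • (d₂ t * star (ξ₂ t))) := by
  set c : ℂ := (2 * Real.pi * Complex.I : ℂ)⁻¹ with hcdef
  -- polarization of the tracial identity
  have key : ∀ a b : A, τ (a * star b) + τ (b * star a) = τ (star a * b) + τ (star b * a) := by
    intro a b
    have h1 := htracial (a + b)
    have e1 : (a + b) * star (a + b) = a * star a + (a * star b + b * star a) + b * star b := by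
      rw [star_add]; noncomm_ring
    have e2 : star (a + b) * (a + b) = star a * a + (star a * b + star b * a) + star b * b := by
      rw [star_add]; noncomm_ring
    rw [e1, e2, map_add, map_add, map_add, map_add, htracial a, htracial b] at h1
    rw [map_add, map_add] at h1
    exact add_left_cancel (add_right_cancel h1)
  -- invariance under unitary conjugation of self-adjoint elements
  have conj_eq : ∀ u x : A, u ∈ unitary A → star x = x → τ (u * x * star u) = τ x := by
    intro u x hu hx
    have h := key (u * x) u
    rw [star_mul, hx] at h
    rw [show u * (x * star u) = u * x * star u from (mul_assoc _ _ _).symm,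
        show x * star u * u = x * (star u * u) from mul_assoc _ _ _,
        show star u * (u * x) = star u * u * x from (mul_assoc _ _ _).symm,
        Unitary.star_mul_self_of_mem hu, mul_one, one_mul] at h
    have h2 : (2 : ℝ) • τ (u * x * star u) = (2 : ℝ) • τ x := by
      rw [two_smul, two_smul]; exact h
    exact smul_right_injective E two_ne_zero h2
  -- skew-adjointness of ξ' ξ* at interior differentiability points
  have hskew : ∀ (ξ d : ℝ → A) (s : Set ℝ), (∀ t ∈ Set.Icc (0 : ℝ) 1, ξ t ∈ unitary A) →
      (∀ t ∈ Set.Icc (0 : ℝ) 1 \ s, HasDerivAt ξ (d t) t) →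
      ∀ t ∈ Set.Ioo (0 : ℝ) 1, t ∉ s → ξ t * star (d t) = -(d t * star (ξ t)) := by
    intro ξ d s hmem hd t ht hts
    have htIcc : t ∈ Set.Icc (0 : ℝ) 1 := Set.Ioo_subset_Icc_self ht
    have h1 : HasDerivAt (fun u => ξ u * star (ξ u))
        (d t * star (ξ t) + ξ t * star (d t)) t :=
      (hd t ⟨htIcc, hts⟩).mul (hd t ⟨htIcc, hts⟩).star
    have h2 : HasDerivAt (fun u => ξ u * star (ξ u)) 0 t := by
      have hev : (fun u => ξ u * star (ξ u)) =ᶠ[nhds t] fun _ => (1 : A) := by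
        filter_upwards [Ioo_mem_nhds ht.1 ht.2] with u hu
        exact Unitary.mul_star_self_of_mem (hmem u (Set.Ioo_subset_Icc_self hu))
      exact (hasDerivAt_const t (1 : A)).congr_of_eventuallyEq hev
    have h0 : d t * star (ξ t) + ξ t * star (d t) = 0 := h1.unique h2
    exact eq_neg_of_add_eq_zero_right h0
  have hc_star : star c = -c := by
    have h : star (2 * (Real.pi : ℂ) * Complex.I) = -(2 * (Real.pi : ℂ) * Complex.I) := by
      simp [Complex.star_def, map_mul, Complex.conj_I, Complex.conj_ofReal, mul_neg]
    rw [hcdef, star_inv₀, h, inv_neg]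
  -- the integrands agree a.e. on the interval
  have hae : ∀ᵐ t ∂MeasureTheory.volume, t ∈ Set.uIoc (0 : ℝ) 1 →
      τ (c • ((d₁ t * ξ₂ t + ξ₁ t * d₂ t) * star (ξ₁ t * ξ₂ t)))
        = τ (c • (d₁ t * star (ξ₁ t))) + τ (c • (d₂ t * star (ξ₂ t))) := by
    have hz : MeasureTheory.volume (s₁ ∪ s₂ ∪ {1} : Set ℝ) = 0 :=
      ((hs₁.union hs₂).union (Set.finite_singleton 1)).measure_zero _
    filter_upwards [MeasureTheory.measure_eq_zero_iff_ae_notMem.mp hz] with t htbad htI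
    rw [Set.uIoc_of_le (zero_le_one : (0:ℝ) ≤ 1)] at htI
    simp only [Set.mem_union, Set.mem_singleton_iff, not_or] at htbad
    obtain ⟨⟨hts₁, hts₂⟩, ht1⟩ := htbad
    have htO : t ∈ Set.Ioo (0 : ℝ) 1 := ⟨htI.1, lt_of_le_of_ne htI.2 ht1⟩
    have htIcc : t ∈ Set.Icc (0 : ℝ) 1 := Set.Ioo_subset_Icc_self htO
    have h2 : ξ₂ t * star (ξ₂ t) = 1 := Unitary.mul_star_self_of_mem (hmem₂ t htIcc)
    have halg : (d₁ t * ξ₂ t + ξ₁ t * d₂ t) * star (ξ₁ t * ξ₂ t)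
        = d₁ t * star (ξ₁ t) + ξ₁ t * (d₂ t * star (ξ₂ t)) * star (ξ₁ t) := by
      rw [star_mul, add_mul]
      congr 1
      · calc d₁ t * ξ₂ t * (star (ξ₂ t) * star (ξ₁ t))
            = d₁ t * (ξ₂ t * star (ξ₂ t)) * star (ξ₁ t) := by noncomm_ring
          _ = d₁ t * star (ξ₁ t) := by rw [h2, mul_one]
      · noncomm_ring
    rw [halg, smul_add, map_add]
    congr 1
    have hx : star (c • (d₂ t * star (ξ₂ t))) = c • (d₂ t * star (ξ₂ t)) := by
      rw [star_smul, star_mul, star_star, hskew ξ₂ d₂ s₂ hmem₂ hd₂ t htO hts₂,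
          hc_star, neg_smul, smul_neg, neg_neg]
    have hmove : c • (ξ₁ t * (d₂ t * star (ξ₂ t)) * star (ξ₁ t))
        = ξ₁ t * (c • (d₂ t * star (ξ₂ t))) * star (ξ₁ t) := by
      rw [mul_smul_comm, smul_mul_assoc]
    rw [hmove]
    exact conj_eq (ξ₁ t) _ (hmem₁ t htIcc) hx
  calc (∫ t in (0 : ℝ)..1, τ (c • ((d₁ t * ξ₂ t + ξ₁ t * d₂ t) * star (ξ₁ t * ξ₂ t))))
      = ∫ t in (0 : ℝ)..1,
          (τ (c • (d₁ t * star (ξ₁ t))) + τ (c • (d₂ t * star (ξ₂ t)))) :=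
        intervalIntegral.integral_congr_ae hae
    _ = _ := intervalIntegral.integral_add hint₁ hint₂
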